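/- Any set of vertices in geodesic mutual visibility in the grid graph G_{M,N} has size at most 2·min{M,N}. -/

import Mathlib

/-- The `M × N` grid graph: vertices `{1,…,M} × {1,…,N}` (modeled as
`Fin M × Fin N`), edges between vertices at L1-distance 1. -/
def gridGraph (M N : ℕ) : SimpleGraph (Fin M × Fin N) where
  Adj a b := Nat.dist (a.1 : ℕ) (b.1 : ℕ) + Nat.dist (a.2 : ℕ) (b.2 : ℕ) = 1
  symm := by
    constructor
    intro a b h
    simpa [Nat.dist_comm] using h
  loopless := by
    constructor
    intro a h
    simp [Nat.dist_self] at h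

/-- Geodesic mutual visibility of a set `S` of vertices. -/
def gmv {V : Type*} (G : SimpleGraph V) (S : Finset V) : Prop :=
  ∀ u ∈ S, ∀ v ∈ S, u ≠ v →
    ∃ p : G.Walk u v, p.length = G.dist u v ∧
      ∀ w ∈ p.support, w ∈ S → w = u ∨ w = v


/-! If `(r, a)`, `(r, b)`, `(r, c)` lie in `S` with `a < b < c`, a shortest walk from `(r, a)` to
`(r, c)` has length `c - a`. Every walk is at least as long as the Manhattan distance of its ends,
so splitting the walk at a vertex `z` in column `b` (which exists by a discrete intermediate value
argument) forces `z = (r, b) ∈ S`, against visibility. Hence each row holds at most two points of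
`S`, giving `#S ≤ 2 * M`; the coordinate swap is a graph isomorphism, giving `#S ≤ 2 * N`. -/

open SimpleGraph Finset

lemma Finset.card_le_two_of_forall_not_lt_lt {α : Type*} [LinearOrder α] {s : Finset α}
    (hs : ∀ a ∈ s, ∀ b ∈ s, ∀ c ∈ s, a < b → b < c → False) : #s ≤ 2 := by
  by_contra! hcard
  let e := s.orderEmbOfFin rfl
  exact hs (e ⟨0, by omega⟩) (s.orderEmbOfFin_mem rfl _) (e ⟨1, by omega⟩)
    (s.orderEmbOfFin_mem rfl _) (e ⟨2, by omega⟩) (s.orderEmbOfFin_mem rfl _)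
    (e.lt_iff_lt.2 (Fin.mk_lt_mk.2 zero_lt_one)) (e.lt_iff_lt.2 (Fin.mk_lt_mk.2 one_lt_two))

namespace SimpleGraph

variable {V W : Type*} {G : SimpleGraph V} {H : SimpleGraph W}

lemma Iso.dist_apply (e : G ≃g H) (u v : V) : H.dist (e u) (e v) = G.dist u v := by
  by_cases hr : G.Reachable u v
  · obtain ⟨p, hp⟩ := hr.exists_walk_length_eq_dist
    obtain ⟨q, hq⟩ := (Iso.reachable_iff.2 hr : H.Reachable (e u) (e v)).exists_walk_length_eq_dist
    refine le_antisymm ?_ ?_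
    · simpa [hp] using dist_le (p.map e.toHom)
    · simpa [hq] using dist_le (q.map e.symm.toHom)
  · rw [dist_eq_zero_of_not_reachable hr,
      dist_eq_zero_of_not_reachable (mt Iso.reachable_iff.1 hr)]

lemma Walk.exists_mem_support_eq_of_le (f : V → ℕ) (hf : ∀ a b, G.Adj a b → f b ≤ f a + 1)
    {x y : V} (p : G.Walk x y) {m : ℕ} (hxm : f x ≤ m) (hmy : m ≤ f y) :
    ∃ z ∈ p.support, f z = m := by
  induction p with
  | nil => exact ⟨_, List.mem_singleton_self _, by omega⟩
  | @cons u v w huv q ih =>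
    rcases hxm.eq_or_lt with rfl | hlt
    · exact ⟨u, by simp, rfl⟩
    · obtain ⟨z, hz, hzm⟩ := ih (by have := hf u v huv; omega) hmy
      exact ⟨z, by simp [hz], hzm⟩

end SimpleGraph

lemma gmv.map_iso {V W : Type*} {G : SimpleGraph V} {H : SimpleGraph W} (e : G ≃g H)
    {S : Finset V} (h : gmv G S) : gmv H (S.map e.toEquiv.toEmbedding) := by
  simp only [gmv, mem_map]
  rintro _ ⟨u, hu, rfl⟩ _ ⟨v, hv, rfl⟩ hne
  obtain ⟨p, hp, hvis⟩ := h u hu v hv (ne_of_apply_ne _ hne)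
  refine ⟨p.map e.toHom, by simp [hp, e.dist_apply], ?_⟩
  simp only [Walk.support_map, List.mem_map]
  rintro _ ⟨w, hw, rfl⟩ ⟨w', hw', hw'w⟩
  simpa using hvis w hw (by simpa [e.injective hw'w] using hw')

namespace gridGraph

variable {M N : ℕ}

def swapIso : gridGraph M N ≃g gridGraph N M where
  toEquiv := Equiv.prodComm _ _
  map_rel_iff' := by simp [gridGraph, add_comm]

lemma snd_le_snd_add_one_of_adj {a b : Fin M × Fin N} (h : (gridGraph M N).Adj a b) :
    (b.2 : ℕ) ≤ a.2 + 1 := by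
  have : Nat.dist a.1 b.1 + Nat.dist a.2 b.2 = 1 := h
  simp only [Nat.dist] at this
  omega

lemma dist_add_dist_le_length {x y : Fin M × Fin N} (p : (gridGraph M N).Walk x y) :
    Nat.dist x.1 y.1 + Nat.dist x.2 y.2 ≤ p.length := by
  induction p with
  | nil => simp [Nat.dist_self]
  | @cons u v w huv q ih =>
    have hstep : Nat.dist u.1 v.1 + Nat.dist u.2 v.2 = 1 := huv
    simp only [Walk.length_cons, Nat.dist] at *
    omega

lemma exists_walk_length_eq_sub (r : Fin M) {a b : Fin N} (hab : a ≤ b) :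
    ∃ p : (gridGraph M N).Walk (r, a) (r, b), p.length = b - a := by
  obtain ⟨k, hk⟩ := Nat.exists_eq_add_of_le (Fin.le_iff_val_le_val.1 hab)
  induction k generalizing b with
  | zero => exact ⟨Walk.nil.copy rfl (by rw [Fin.ext hk.symm]), by simp [hk]⟩
  | succ k ih =>
    let b' : Fin N := ⟨a + k, by omega⟩
    obtain ⟨p, hp⟩ := ih (b := b') (Fin.le_iff_val_le_val.2 (by simp [b'])) rfl
    have hadj : (gridGraph M N).Adj (r, b') (r, b) := by
      show Nat.dist r r + Nat.dist (a + k) b = 1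
      simp only [Nat.dist]
      omega
    exact ⟨p.concat hadj, by simp [hp, b']; omega⟩

end gridGraph

namespace gmv

variable {M N : ℕ} {S : Finset (Fin M × Fin N)}

lemma not_lt_lt_of_mem_row (h : gmv (gridGraph M N) S) {r : Fin M} {a b c : Fin N}
    (ha : (r, a) ∈ S) (hb : (r, b) ∈ S) (hc : (r, c) ∈ S) (hab : a < b) (hbc : b < c) : False := by
  obtain ⟨p, hp, hvis⟩ := h _ ha _ hc (by simp [(hab.trans hbc).ne])
  have hlen : p.length ≤ c - a := by
    obtain ⟨q, hq⟩ := gridGraph.exists_walk_length_eq_sub r (hab.trans hbc).le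
    exact hp ▸ hq ▸ dist_le q
  obtain ⟨z, hz, hzb⟩ := p.exists_mem_support_eq_of_le (fun v => (v.2 : ℕ))
    (fun _ _ => gridGraph.snd_le_snd_add_one_of_adj) hab.le hbc.le
  have hzr : z.1 = r := by
    have h₁ := gridGraph.dist_add_dist_le_length (p.takeUntil z hz)
    have h₂ := gridGraph.dist_add_dist_le_length (p.dropUntil z hz)
    have hsplit := congrArg Walk.length (p.take_spec hz)
    simp only [Walk.length_append, Nat.dist] at h₁ h₂ hsplit hzb
    exact Fin.ext (by omega)
  obtain rfl : z = (r, b) := Prod.ext hzr (Fin.ext hzb)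
  rcases hvis _ hz hb with h' | h'
  · exact hab.ne' (Prod.ext_iff.1 h').2
  · exact hbc.ne (Prod.ext_iff.1 h').2

lemma card_filter_fst_eq_le_two (h : gmv (gridGraph M N) S) (r : Fin M) :
    #{x ∈ S | x.1 = r} ≤ 2 := by
  have hinj : Set.InjOn Prod.snd (↑{x ∈ S | x.1 = r} : Set (Fin M × Fin N)) :=
    fun x hx y hy hxy => Prod.ext ((mem_filter.1 hx).2.trans (mem_filter.1 hy).2.symm) hxy
  rw [← card_image_of_injOn hinj]
  refine card_le_two_of_forall_not_lt_lt ?_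
  simp only [mem_image, mem_filter]
  rintro _ ⟨⟨_, a⟩, ⟨ha, rfl⟩, rfl⟩ _ ⟨⟨_, b⟩, ⟨hb, rfl⟩, rfl⟩ _ ⟨⟨_, c⟩, ⟨hc, rfl⟩, rfl⟩
  exact h.not_lt_lt_of_mem_row ha hb hc

lemma card_le_two_mul_left (h : gmv (gridGraph M N) S) : #S ≤ 2 * M := by
  simpa using card_le_mul_card_image_of_maps_to (fun x _ => mem_univ x.1) 2
    (fun r _ => h.card_filter_fst_eq_le_two r)

end gmv

/-- Any set in geodesic mutual visibility in the `M × N` grid graph has size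
at most `2 * min M N`. -/
theorem stmt5 (M N : ℕ) (S : Finset (Fin M × Fin N))
    (h : gmv (gridGraph M N) S) :
    S.card ≤ 2 * min M N := by
  have hM : #S ≤ 2 * M := h.card_le_two_mul_left
  have hN : #S ≤ 2 * N := by
    simpa using (h.map_iso gridGraph.swapIso).card_le_two_mul_left
  omega
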